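/- With the notation of the Kalikow decomposition for the saturation-threshold model, for every k ≥ 1 the weight μ_i(k) satisfies μ_i(k) ≤ γ ∑_{j ∈ V_i(k) \ V_i(k−1)} |W_{j→i}| K_{j→i}. -/

import Mathlib

open Set

/-!
Write `g η = φ (∑' j, W j * η j)`, so that `α k = inf_ζ (inf g + inf (1 - g))`, both inner infima
running over the configurations that agree with `ζ` on `V k`. Given `ζ` and two competitors `η, η'`
for the infima at level `k - 1`, the configuration `ρ` equal to `η` on `V k` and to `η'` elsewhere is
a competitor for `1 - g` at level `k` around `η`, so `α k ≤ g η + 1 - g ρ`. Since `ρ` and `η'` differ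
only on `V k \ V (k - 1)`, where both lie in `[0, K j]`, Lipschitz continuity of `φ` gives
`g η' ≤ g ρ + γ ∑_{V k \ V (k - 1)} |W j| K j`; taking infima over `η, η', ζ` yields the claim.
-/

theorem le_sInf_add_sInf {s t : Set ℝ} {c : ℝ} (hs : s.Nonempty) (ht : t.Nonempty)
    (h : ∀ a ∈ s, ∀ b ∈ t, c ≤ a + b) : c ≤ sInf s + sInf t := by
  rw [← sub_le_iff_le_add]
  refine le_csInf hs fun a ha => ?_
  rw [sub_le_comm]
  exact le_csInf ht fun b hb => by linarith [h a ha b hb]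

theorem abs_tsum_sub_tsum_le_sum {ι : Type*} {a b : ι → ℝ} (ha : Summable a) (hb : Summable b)
    (s : Finset ι) (hab : ∀ j ∉ s, a j = b j) :
    |∑' j, a j - ∑' j, b j| ≤ ∑ j ∈ s, |a j - b j| := by
  rw [← ha.tsum_sub hb, tsum_eq_sum fun j hj => sub_eq_zero.2 (hab j hj)]
  exact Finset.abs_sum_le_sum_abs _ _

section Kalikow

variable {I β : Type*}

def cylinder (S : Set (I → β)) (A : Finset I) (ζ : I → β) : Set (I → β) :=
  {η ∈ S | ∀ j ∈ A, η j = ζ j}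

theorem self_mem_cylinder {S : Set (I → β)} {ζ : I → β} (hζ : ζ ∈ S) (A : Finset I) :
    ζ ∈ cylinder S A ζ :=
  ⟨hζ, fun _ _ => rfl⟩

/-- The weight `α(A) = inf_ζ (r(1 | ζ) + r(0 | ζ))` of the Kalikow decomposition on the
neighbourhood `A`, for the spiking probability `g` on the configuration space `S`. -/
noncomputable def kalikowAlpha (S : Set (I → β)) (g : (I → β) → ℝ) (A : Finset I) : ℝ :=
  sInf ((fun ζ => sInf (g '' cylinder S A ζ) + sInf ((fun η => 1 - g η) '' cylinder S A ζ)) '' S)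

variable {S : Set (I → β)} {g : (I → β) → ℝ}

theorem kalikowAlpha_le (hg : ∀ η, g η ∈ Icc (0 : ℝ) 1) {A : Finset I} {η ρ : I → β}
    (hη : η ∈ S) (hρ : ρ ∈ cylinder S A η) : kalikowAlpha S g A ≤ g η + (1 - g ρ) := by
  have hg0 : ∀ s : Set (I → β), ∀ y ∈ g '' s, 0 ≤ y := by
    rintro s _ ⟨x, -, rfl⟩
    exact (hg x).1
  have hg1 : ∀ s : Set (I → β), ∀ y ∈ (fun η => 1 - g η) '' s, 0 ≤ y := by
    rintro s _ ⟨x, -, rfl⟩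
    exact sub_nonneg.2 (hg x).2
  calc kalikowAlpha S g A
      ≤ sInf (g '' cylinder S A η) + sInf ((fun η => 1 - g η) '' cylinder S A η) := by
        refine csInf_le ⟨0, ?_⟩ ⟨η, hη, rfl⟩
        rintro _ ⟨ζ, -, rfl⟩
        exact add_nonneg (Real.sInf_nonneg (hg0 _)) (Real.sInf_nonneg (hg1 _))
    _ ≤ g η + (1 - g ρ) :=
        add_le_add (csInf_le ⟨0, hg0 _⟩ ⟨η, self_mem_cylinder hη A, rfl⟩)
          (csInf_le ⟨0, hg1 _⟩ ⟨ρ, hρ, rfl⟩)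

theorem kalikowAlpha_le_add [DecidableEq I] (hg : ∀ η, g η ∈ Icc (0 : ℝ) 1) (hS : S.Nonempty)
    {A B : Finset I} (hpatch : ∀ η ∈ S, ∀ η' ∈ S, B.piecewise η η' ∈ S) {δ : ℝ}
    (hδ : ∀ η ∈ S, ∀ η' ∈ S, (∀ j ∉ B \ A, η j = η' j) → g η' ≤ g η + δ) :
    kalikowAlpha S g B ≤ kalikowAlpha S g A + δ := by
  rw [← sub_le_iff_le_add]
  refine le_csInf (hS.image _) ?_
  rintro _ ⟨ζ, hζ, rfl⟩
  have hcyl : (cylinder S A ζ).Nonempty := ⟨ζ, self_mem_cylinder hζ A⟩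
  refine le_sInf_add_sInf (hcyl.image _) (hcyl.image _) ?_
  rintro _ ⟨η, ⟨hη, hηA⟩, rfl⟩ _ ⟨η', ⟨hη', hη'A⟩, rfl⟩
  have hρ : B.piecewise η η' ∈ cylinder S B η :=
    ⟨hpatch η hη η' hη', fun j hj => B.piecewise_eq_of_mem _ _ hj⟩
  have hρη' : ∀ j ∉ B \ A, B.piecewise η η' j = η' j := by
    intro j hj
    by_cases hjB : j ∈ B
    · have hjA : j ∈ A := by simpa [hjB] using hj
      rw [B.piecewise_eq_of_mem _ _ hjB, hηA j hjA, hη'A j hjA]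
    · exact B.piecewise_eq_of_notMem _ _ hjB
  have hα := kalikowAlpha_le hg hη hρ
  have hgρ := hδ _ hρ.1 η' hη' hρη'
  linarith

end Kalikow

section SaturationThreshold

variable {I : Type*} {W K : I → ℝ}

theorem summable_mul_of_le (hsum : Summable fun j => |W j| * K j) {η : I → ℕ}
    (hη : ∀ j, (η j : ℝ) ≤ K j) : Summable fun j => W j * (η j : ℝ) :=
  hsum.of_norm_bounded fun j => by
    rw [Real.norm_eq_abs, abs_mul, Nat.abs_cast]
    exact mul_le_mul_of_nonneg_left (hη j) (abs_nonneg _)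

theorem abs_tsum_mul_sub_le (hsum : Summable fun j => |W j| * K j) {η η' : I → ℕ}
    (hη : ∀ j, (η j : ℝ) ≤ K j) (hη' : ∀ j, (η' j : ℝ) ≤ K j) (s : Finset I)
    (hηη' : ∀ j ∉ s, η j = η' j) :
    |∑' j, W j * (η j : ℝ) - ∑' j, W j * (η' j : ℝ)| ≤ ∑ j ∈ s, |W j| * K j := by
  refine (abs_tsum_sub_tsum_le_sum (summable_mul_of_le hsum hη) (summable_mul_of_le hsum hη') s
    fun j hj => by rw [hηη' j hj]).trans (Finset.sum_le_sum fun j _ => ?_)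
  rw [← mul_sub, abs_mul]
  exact mul_le_mul_of_nonneg_left
    (abs_sub_le_of_nonneg_of_le (Nat.cast_nonneg _) (hη j) (Nat.cast_nonneg _) (hη' j))
    (abs_nonneg _)

end SaturationThreshold

theorem stmt2_general {I : Type*} [DecidableEq I] (γ : ℝ) (hγ : 0 ≤ γ)
    (φ : ℝ → ℝ) (hφLip : ∀ x y : ℝ, |φ x - φ y| ≤ γ * |x - y|)
    (hφ01 : ∀ x, φ x ∈ Set.Icc (0 : ℝ) 1)
    (W K : I → ℝ) (hK : ∀ j, 0 < K j)
    (hsum : Summable (fun j => |W j| * K j))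
    (V : ℕ → Finset I)
    (Stilde : Set (I → ℕ)) (hS : Stilde = {η | ∀ j, (η j : ℝ) ≤ K j})
    (D : ℕ → (I → ℕ) → Set (I → ℕ))
    (hD : ∀ k ζ, D k ζ = {η ∈ Stilde | ∀ j ∈ V k, η j = ζ j})
    (r1 r0 : ℕ → (I → ℕ) → ℝ)
    (hr1 : ∀ k ζ, r1 k ζ = sInf ((fun η : I → ℕ => φ (∑' j, W j * (η j : ℝ))) '' D k ζ))
    (hr0 : ∀ k ζ, r0 k ζ = sInf ((fun η : I → ℕ => 1 - φ (∑' j, W j * (η j : ℝ))) '' D k ζ))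
    (α : ℕ → ℝ) (hα : ∀ k, α k = sInf ((fun ζ => r1 k ζ + r0 k ζ) '' Stilde))
    (μ : ℕ → ℝ) (hμ : ∀ k, 1 ≤ k → μ k = α k - α (k - 1)) :
    ∀ k, 1 ≤ k → μ k ≤ γ * ∑ j ∈ V k \ V (k - 1), |W j| * K j := by
  intro k hk
  set g : (I → ℕ) → ℝ := fun η => φ (∑' j, W j * (η j : ℝ))
  have hαg : ∀ n, α n = kalikowAlpha Stilde g (V n) := fun n => by
    simp only [hα, hr1, hr0, hD]
    rfl
  subst hS
  rw [hμ k hk, hαg, hαg, sub_le_iff_le_add']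
  refine kalikowAlpha_le_add (fun η => hφ01 _) ⟨0, fun j => by simpa using (hK j).le⟩
    (fun η hη η' hη' j => ?_) fun η hη η' hη' hηη' => ?_
  · by_cases hj : j ∈ V k <;> simp [Finset.piecewise, hj, hη j, hη' j]
  · have hφ := (abs_le.1 (hφLip (∑' j, W j * (η' j : ℝ)) (∑' j, W j * (η j : ℝ)))).2
    have hdist := abs_tsum_mul_sub_le hsum hη' hη _ fun j hj => (hηη' j hj).symm
    linarith [mul_le_mul_of_nonneg_left hdist hγ]

/-- In the Kalikow decomposition for the saturation-threshold model,
μ_i(k) ≤ γ ∑_{j ∈ V_i(k) \ V_i(k−1)} |W_{j→i}| K_{j→i} for every k ≥ 1. -/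
theorem stmt2 {I : Type*} [Countable I] [DecidableEq I] (γ : ℝ) (hγ : 0 ≤ γ)
    (φ : ℝ → ℝ) (hφLip : ∀ x y : ℝ, |φ x - φ y| ≤ γ * |x - y|)
    (hφmono : Monotone φ) (hφ01 : ∀ x, φ x ∈ Set.Icc (0 : ℝ) 1)
    (W K : I → ℝ) (hK : ∀ j, 0 < K j)
    (hsum : Summable (fun j => |W j| * K j))
    (V : ℕ → Finset I) (hV0 : V 0 = ∅) (hVmono : Monotone V)
    (hVcov : ∀ j, W j ≠ 0 → ∃ k, j ∈ V k)
    (Stilde : Set (I → ℕ)) (hS : Stilde = {η | ∀ j, (η j : ℝ) ≤ K j})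
    (D : ℕ → (I → ℕ) → Set (I → ℕ))
    (hD : ∀ k ζ, D k ζ = {η ∈ Stilde | ∀ j ∈ V k, η j = ζ j})
    (r1 r0 : ℕ → (I → ℕ) → ℝ)
    (hr1 : ∀ k ζ, r1 k ζ = sInf ((fun η : I → ℕ => φ (∑' j, W j * (η j : ℝ))) '' D k ζ))
    (hr0 : ∀ k ζ, r0 k ζ = sInf ((fun η : I → ℕ => 1 - φ (∑' j, W j * (η j : ℝ))) '' D k ζ))
    (α : ℕ → ℝ) (hα : ∀ k, α k = sInf ((fun ζ => r1 k ζ + r0 k ζ) '' Stilde))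
    (μ : ℕ → ℝ) (hμ0 : μ 0 = α 0) (hμ : ∀ k, 1 ≤ k → μ k = α k - α (k - 1)) :
    ∀ k, 1 ≤ k → μ k ≤ γ * ∑ j ∈ V k \ V (k - 1), |W j| * K j :=
  stmt2_general γ hγ φ hφLip hφ01 W K hK hsum V Stilde hS D hD r1 r0 hr1 hr0 α hα μ hμ
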